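/- Let k be a field, d a positive integer, and q an integer with q ≥ d. Write q = k₀·d + a with 0 ≤ a < d. Then the k[T]-module M = k[x]/(x^q), with T acting as multiplication by x^d, decomposes as M ≅ (k[T]/(T^{k₀+1}))^a ⊕ (k[T]/(T^{k₀}))^{d−a}. -/

import Mathlib

/-!
In the monomial basis `1, x, …, x^(q-1)` of `k[x]/(x^q)`, multiplication by `x^d` sends `x^n` to
`x^(n+d)` (or to `0` once `n + d ≥ q`), so the basis splits into the `d` residue classes of
exponents modulo `d`, each a Jordan chain `x^j, x^(j+d), x^(j+2d), …` on which `T` acts as the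
shift. A chain of length `L` is exactly the monomial basis of `k[T]/(T^L)` with `T` acting by
multiplication. Writing `q = k₀ d + a`, the `a` classes `j < a` have `k₀ + 1` members and the
other `d - a` have `k₀`.
-/

open Polynomial

namespace Polynomial

variable (R : Type*) [CommRing R] [Nontrivial R]

noncomputable def quotientSpanXPowBasis (n : ℕ) :
    Module.Basis (Fin n) R (R[X] ⧸ Ideal.span {(X : R[X]) ^ n}) :=
  (AdjoinRoot.powerBasis' (monic_X_pow n)).basis.reindex (finCongr (natDegree_X_pow n))

lemma quotientSpanXPowBasis_apply (n : ℕ) (i : Fin n) :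
    quotientSpanXPowBasis R n i = Ideal.Quotient.mk _ X ^ (i : ℕ) := by
  erw [quotientSpanXPowBasis, Module.Basis.reindex_apply, PowerBasis.basis_eq_pow,
    AdjoinRoot.powerBasis'_gen]
  rfl

end Polynomial

lemma Polynomial.mk_X_pow_eq_zero_of_le {R : Type*} [CommRing R] {n m : ℕ} (h : n ≤ m) :
    (Ideal.Quotient.mk (Ideal.span {(X : R[X]) ^ n}) X) ^ m = 0 := by
  rw [← map_pow, Ideal.Quotient.eq_zero_iff_mem, Ideal.mem_span_singleton]
  exact pow_dvd_pow X h

theorem exists_linearEquiv_pi_quotient_X_pow {R : Type*} [CommRing R] [Nontrivial R]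
    {β : Type*} [Fintype β] [DecidableEq β]
    (c L : β → ℕ) (d q : ℕ) (σ : (Σ b, Fin (L b)) ≃ Fin q)
    (hσ : ∀ x, (σ x : ℕ) = c x.1 + d * x.2) (hL : ∀ b, q ≤ c b + d * L b) :
    ∃ e : (R[X] ⧸ Ideal.span {(X : R[X]) ^ q}) ≃ₗ[R]
        Π b, R[X] ⧸ Ideal.span {(X : R[X]) ^ L b},
      ∀ m, e (Ideal.Quotient.mk _ (X ^ d) * m) = fun b => Ideal.Quotient.mk _ X * e m b := by
  let e := (quotientSpanXPowBasis R q).equiv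
    (Pi.basis fun b => quotientSpanXPowBasis R (L b)) σ.symm
  have e_X_pow : ∀ b m, e (Ideal.Quotient.mk _ X ^ (c b + d * m)) =
      Pi.single b (Ideal.Quotient.mk _ X ^ m) := by
    intro b m
    rcases lt_or_ge m (L b) with hm | hm
    · rw [← hσ ⟨b, ⟨m, hm⟩⟩, ← quotientSpanXPowBasis_apply, Module.Basis.equiv_apply,
        Equiv.symm_apply_apply, Pi.basis_apply, quotientSpanXPowBasis_apply]
    · rw [mk_X_pow_eq_zero_of_le ((hL b).trans (by gcongr)), mk_X_pow_eq_zero_of_le hm,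
        map_zero, Pi.single_zero]
  have e_comp_mulLeft : e.toLinearMap ∘ₗ LinearMap.mulLeft R (Ideal.Quotient.mk _ (X ^ d)) =
      (LinearMap.pi fun b =>
        LinearMap.mulLeft R (Ideal.Quotient.mk _ X) ∘ₗ LinearMap.proj b) ∘ₗ e.toLinearMap := by
    refine (quotientSpanXPowBasis R q).ext fun n => ?_
    obtain ⟨⟨b, i⟩, rfl⟩ := σ.surjective n
    rw [LinearMap.comp_apply, LinearMap.comp_apply, quotientSpanXPowBasis_apply, hσ]
    simp only [LinearMap.mulLeft_apply, LinearEquiv.coe_coe, map_pow, ← pow_add]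
    rw [show d + (c b + d * i) = c b + d * (i + 1) by ring, e_X_pow, e_X_pow]
    funext b'
    rcases eq_or_ne b' b with rfl | h
    · simp [pow_succ']
    · simp [h]
  exact ⟨e, fun m => LinearMap.congr_fun e_comp_mulLeft m⟩

lemma Function.Injective.sigma_add_mul {β : Type*} {L : β → ℕ} {c : β → ℕ} {d : ℕ}
    (hc : Function.Injective c) (hcd : ∀ b, c b < d) :
    Function.Injective fun x : (Σ b, Fin (L b)) => c x.1 + d * x.2 := by
  rintro ⟨b, i⟩ ⟨b', i'⟩ h
  dsimp only at h
  have hb : b = b' := hc <| by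
    simpa [Nat.add_mul_mod_self_left, Nat.mod_eq_of_lt (hcd _)] using congrArg (· % d) h
  subst hb
  have hi : i = i' :=
    Fin.ext <| Nat.eq_of_mul_eq_mul_left ((Nat.zero_le _).trans_lt (hcd b)) (by omega)
  rw [hi]

section residueBlocks

variable (a d k₀ : ℕ)

-- Block `inl j` is the residue class of `j`, block `inr j` that of `a + j`.
def residueOffset : Fin a ⊕ Fin (d - a) → ℕ := Sum.elim (fun j => j) (fun j => a + j)

def residueLength : Fin a ⊕ Fin (d - a) → ℕ := Sum.elim (fun _ => k₀ + 1) (fun _ => k₀)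

variable {a d k₀}

lemma residueOffset_lt (ha : a < d) (b : Fin a ⊕ Fin (d - a)) : residueOffset a d b < d := by
  rcases b with j | j <;> simp only [residueOffset, Sum.elim_inl, Sum.elim_inr] <;> omega

lemma residueOffset_injective : Function.Injective (residueOffset a d) := by
  rintro (j | j) (j' | j') h <;> simp only [residueOffset, Sum.elim_inl, Sum.elim_inr] at h <;>
    first | omega | simp [Fin.ext (by omega : (j : ℕ) = j')]

lemma le_residueOffset_add_mul_residueLength (ha : a < d) {q : ℕ} (hq : d * k₀ + a = q)
    (b : Fin a ⊕ Fin (d - a)) : q ≤ residueOffset a d b + d * residueLength a d k₀ b := by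
  subst hq
  rcases b with j | j <;> simp only [residueOffset, residueLength, Sum.elim_inl, Sum.elim_inr]
    <;> nlinarith

lemma residueOffset_add_mul_lt {b : Fin a ⊕ Fin (d - a)} {i : ℕ}
    (hi : i < residueLength a d k₀ b) : residueOffset a d b + d * i < d * k₀ + a := by
  rcases b with j | j <;>
    simp only [residueOffset, residueLength, Sum.elim_inl, Sum.elim_inr] at hi ⊢
  · have := Nat.mul_le_mul_left d (Nat.lt_succ_iff.mp hi)
    omega
  · have := Nat.mul_le_mul_left d hi
    rw [Nat.mul_succ] at this
    omega

lemma sum_residueLength (ha : a < d) : ∑ b, residueLength a d k₀ b = d * k₀ + a := by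
  simp only [residueLength, Fintype.sum_sum_type, Sum.elim_inl, Sum.elim_inr, Finset.sum_const,
    Finset.card_univ, Fintype.card_fin, smul_eq_mul]
  obtain ⟨e, rfl⟩ : ∃ e, d = a + e := ⟨d - a, by omega⟩
  rw [Nat.add_sub_cancel_left]
  ring

lemma exists_sigmaEquiv_residueBlocks (ha : a < d) {q : ℕ} (hq : d * k₀ + a = q) :
    ∃ σ : (Σ b, Fin (residueLength a d k₀ b)) ≃ Fin q,
      ∀ x, (σ x : ℕ) = residueOffset a d x.1 + d * x.2 := by
  subst hq
  let τ : (Σ b, Fin (residueLength a d k₀ b)) → Fin (d * k₀ + a) :=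
    fun x => ⟨residueOffset a d x.1 + d * x.2, residueOffset_add_mul_lt x.2.2⟩
  have hτ : Function.Bijective τ := by
    refine (Fintype.bijective_iff_injective_and_card τ).2 ⟨fun x y h => ?_, ?_⟩
    · exact residueOffset_injective.sigma_add_mul (residueOffset_lt ha) (Fin.val_eq_of_eq h)
    · simp [sum_residueLength ha]
  exact ⟨.ofBijective τ hτ, fun _ => rfl⟩

end residueBlocks

theorem stmt2_general (k : Type*) [Field k] (d q : ℕ) (hd : 0 < d) :
    ∃ (e : (Polynomial k ⧸ Ideal.span {(X : Polynomial k) ^ q}) ≃ₗ[k]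
        ((Fin (q % d) → Polynomial k ⧸ Ideal.span {(X : Polynomial k) ^ (q / d + 1)}) ×
          (Fin (d - q % d) → Polynomial k ⧸ Ideal.span {(X : Polynomial k) ^ (q / d)}))),
      ∀ m, e (Ideal.Quotient.mk _ ((X : Polynomial k) ^ d) * m) =
        (fun i => Ideal.Quotient.mk _ (X : Polynomial k) * (e m).1 i,
         fun i => Ideal.Quotient.mk _ (X : Polynomial k) * (e m).2 i) := by
  have ha : q % d < d := Nat.mod_lt q hd
  have hq : d * (q / d) + q % d = q := Nat.div_add_mod q d
  obtain ⟨σ, hσ⟩ := exists_sigmaEquiv_residueBlocks (k₀ := q / d) ha hq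
  obtain ⟨e, he⟩ := exists_linearEquiv_pi_quotient_X_pow (R := k) _ _ d q σ hσ
    (le_residueOffset_add_mul_residueLength ha hq)
  exact ⟨e.trans (LinearEquiv.sumPiEquivProdPi k _ _ _),
    fun m => congrArg (LinearEquiv.sumPiEquivProdPi k _ _ _) (he m)⟩

theorem stmt2 (k : Type*) [Field k] (d q : ℕ) (hd : 0 < d) (hq : d ≤ q) :
    ∃ (e : (Polynomial k ⧸ Ideal.span {(X : Polynomial k) ^ q}) ≃ₗ[k]
        ((Fin (q % d) → Polynomial k ⧸ Ideal.span {(X : Polynomial k) ^ (q / d + 1)}) ×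
          (Fin (d - q % d) → Polynomial k ⧸ Ideal.span {(X : Polynomial k) ^ (q / d)}))),
      ∀ m, e (Ideal.Quotient.mk _ ((X : Polynomial k) ^ d) * m) =
        (fun i => Ideal.Quotient.mk _ (X : Polynomial k) * (e m).1 i,
         fun i => Ideal.Quotient.mk _ (X : Polynomial k) * (e m).2 i) :=
  stmt2_general k d q hd
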